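/- An infinite word w over a d-letter alphabet (all letters occurring) is dendric if and only if p_w(n) = (d−1)n + 1 for all n ≥ 1 and the extension graph of every factor of w is connected. -/

import Mathlib

def factorAt {A : Type*} (w : ℕ → A) (i n : ℕ) : List A :=
  (List.range n).map fun k => w (i + k)

def factors {A : Type*} (w : ℕ → A) (n : ℕ) : Set (List A) :=
  {u | ∃ i, u = factorAt w i n}

noncomputable def complexity {A : Type*} (w : ℕ → A) (n : ℕ) : ℕ :=
  (factors w n).ncard

/-- The extension graph of a factor `u` of `w`, as a simple graph on the disjoint
union of two copies of the alphabet: a left copy `Sum.inl a` and a right copy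
`Sum.inr b` are adjacent iff `a · u · b` is a factor of `w`. -/
def extGraph {d : ℕ} (w : ℕ → Fin d) (u : List (Fin d)) :
    SimpleGraph (Fin d ⊕ Fin d) where
  Adj x y := ∃ a b, (a :: (u ++ [b])) ∈ factors w (u.length + 2) ∧
      ((x = Sum.inl a ∧ y = Sum.inr b) ∨ (x = Sum.inr b ∧ y = Sum.inl a))
  symm := by
    constructor
    rintro x y ⟨a, b, hm, hc⟩
    exact ⟨a, b, hm, by tauto⟩
  loopless := by
    constructor
    rintro x ⟨a, b, hm, ⟨h1, h2⟩ | ⟨h1, h2⟩⟩ <;> subst h1 <;> simp at h2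

/-- The vertex set of the extension graph of `u`: the left copies of letters `a`
with `a · u` a factor of `w`, and the right copies of letters `b` with `u · b` a
factor of `w`. -/
def extVertices {d : ℕ} (w : ℕ → Fin d) (u : List (Fin d)) : Set (Fin d ⊕ Fin d) :=
  {x | (∃ a, x = Sum.inl a ∧ (a :: u) ∈ factors w (u.length + 1)) ∨
       (∃ b, x = Sum.inr b ∧ (u ++ [b]) ∈ factors w (u.length + 1))}

/-- `w` is dendric if the extension graph of every factor of `w` is a tree. -/
def Dendric {d : ℕ} (w : ℕ → Fin d) : Prop :=
  ∀ n, ∀ u ∈ factors w n, ((extGraph w u).induce (extVertices w u)).IsTree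

/-!
With `L(u)`, `R(u)`, `B(u)` the left, right and two-sided extensions of `u`, cutting the factors
of lengths `n + 1` and `n + 2` at their last, first, or first and last letters gives
`p(n+2) + p(n) = ∑ (|B(u)| + 1)` and `2 p(n+1) = ∑ (|L(u)| + |R(u)|)`, sums over factors `u` of
length `n`. Since `Ext(u)` has `|L(u)| + |R(u)|` vertices and `|B(u)|` edges, a connected `Ext(u)`
has `|L(u)| + |R(u)| ≤ |B(u)| + 1`, with equality iff it is a tree. So when all extension graphs
are connected, those of the factors of length `n` are all trees iff the second difference of `p`
vanishes at `n`; and `p` has vanishing second difference iff it is affine, `p(n) = (d - 1) n + 1`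
given `p(0) = 1` and `p(1) = d`.
-/

theorem Set.ncard_biUnion_image_eq_sum {α β γ : Type*} (T : Finset β) {E : β → Set γ}
    (hE : ∀ b, (E b).Finite) {g : β → γ → α} (hg : Function.Injective2 g) :
    (⋃ b ∈ T, g b '' E b).ncard = ∑ b ∈ T, (E b).ncard := by
  classical
  have hunion : ⋃ b ∈ T, g b '' E b = ↑(T.biUnion fun b => (hE b).toFinset.image (g b)) := by
    simp
  rw [hunion, Set.ncard_coe_finset, Finset.card_biUnion]
  · refine Finset.sum_congr rfl fun b _ => ?_
    rw [Finset.card_image_of_injective _ (hg.right b), Set.ncard_eq_toFinset_card _ (hE b)]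
  · intro b _ b' _ hne
    simp only [Function.onFun, Finset.disjoint_left, Finset.mem_image, Set.Finite.mem_toFinset]
    rintro _ ⟨x, -, rfl⟩ ⟨x', -, hx'⟩
    exact hne (hg hx').1.symm

theorem Nat.add_mul_eq_of_second_diff_eq_zero {f : ℕ → ℕ}
    (h : ∀ n, f (n + 2) + f n = 2 * f (n + 1)) (n : ℕ) :
    f n + n * f 0 = f 0 + n * f 1 := by
  induction n using Nat.twoStepInduction with
  | zero => simp
  | one => ring
  | more n ih₀ ih₁ =>
    have := h n
    linarith

theorem SimpleGraph.natCard_edgeSet_induce_of_support_subset {V : Type*} {G : SimpleGraph V}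
    {s : Set V} (h : G.support ⊆ s) : Nat.card (G.induce s).edgeSet = Nat.card G.edgeSet := by
  refine Nat.card_congr (Equiv.ofBijective (Embedding.induce s).toHom.mapEdgeSet
    ⟨Hom.mapEdgeSet.injective _ Subtype.val_injective, ?_⟩)
  rintro ⟨e, he⟩
  induction e using Sym2.ind with
  | _ x y =>
    have hx : x ∈ s := h ⟨y, he⟩
    have hy : y ∈ s := h ⟨x, he.symm⟩
    exact ⟨⟨s(⟨x, hx⟩, ⟨y, hy⟩), he⟩, rfl⟩

section Factors

variable {A : Type*} (w : ℕ → A)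

theorem factorAt_length (i n : ℕ) : (factorAt w i n).length = n := by
  simp [factorAt]

theorem factorAt_succ (i n : ℕ) : factorAt w i (n + 1) = factorAt w i n ++ [w (i + n)] := by
  simp [factorAt, List.range_succ]

theorem factorAt_succ' (i n : ℕ) : factorAt w i (n + 1) = w i :: factorAt w (i + 1) n := by
  simp [factorAt, List.range_succ_eq_map, Nat.add_assoc, Nat.add_comm 1]

theorem factorAt_mem_factors (i n : ℕ) : factorAt w i n ∈ factors w n := ⟨i, rfl⟩

variable {w}

theorem length_of_mem_factors {u : List A} {n : ℕ} (h : u ∈ factors w n) : u.length = n := by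
  obtain ⟨i, rfl⟩ := h
  exact factorAt_length w i n

theorem dropLast_mem_factors {u : List A} {n : ℕ} (h : u ∈ factors w (n + 1)) :
    u.dropLast ∈ factors w n := by
  obtain ⟨i, rfl⟩ := h
  rw [factorAt_succ, List.dropLast_concat]
  exact factorAt_mem_factors w i n

theorem tail_mem_factors {u : List A} {n : ℕ} (h : u ∈ factors w (n + 1)) :
    u.tail ∈ factors w n := by
  obtain ⟨i, rfl⟩ := h
  rw [factorAt_succ']
  exact factorAt_mem_factors w (i + 1) n

variable (w)

theorem factors_zero : factors w 0 = {[]} := by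
  ext u
  simp [factors, factorAt]

theorem complexity_zero : complexity w 0 = 1 := by
  rw [complexity, factors_zero, Set.ncard_singleton]

theorem factors_finite [Finite A] (n : ℕ) : (factors w n).Finite :=
  (List.finite_length_eq A n).subset fun _ h => length_of_mem_factors h

noncomputable def factorFinset [Finite A] (n : ℕ) : Finset (List A) :=
  (factors_finite w n).toFinset

@[simp]
theorem mem_factorFinset [Finite A] {u : List A} {n : ℕ} :
    u ∈ factorFinset w n ↔ u ∈ factors w n :=
  Set.Finite.mem_toFinset _

theorem complexity_eq_card_factorFinset [Finite A] (n : ℕ) :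
    complexity w n = (factorFinset w n).card :=
  Set.ncard_eq_toFinset_card _ _

def leftExt (u : List A) : Set A :=
  {a | a :: u ∈ factors w (u.length + 1)}

def rightExt (u : List A) : Set A :=
  {b | u ++ [b] ∈ factors w (u.length + 1)}

def biExt (u : List A) : Set (A × A) :=
  {p | p.1 :: (u ++ [p.2]) ∈ factors w (u.length + 2)}

theorem factors_succ_eq_biUnion_rightExt [Finite A] (n : ℕ) :
    factors w (n + 1) = ⋃ u ∈ factorFinset w n, (fun b => u ++ [b]) '' rightExt w u := by
  ext v
  simp only [Set.mem_iUnion, Set.mem_image, mem_factorFinset, rightExt, Set.mem_ofPred_eq]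
  constructor
  · rintro ⟨i, rfl⟩
    refine ⟨_, factorAt_mem_factors w i n, w (i + n), ?_, (factorAt_succ w i n).symm⟩
    rw [factorAt_length, ← factorAt_succ]
    exact factorAt_mem_factors w i (n + 1)
  · rintro ⟨u, hu, b, hb, rfl⟩
    rwa [length_of_mem_factors hu] at hb

theorem factors_succ_eq_biUnion_leftExt [Finite A] (n : ℕ) :
    factors w (n + 1) = ⋃ u ∈ factorFinset w n, (fun a => a :: u) '' leftExt w u := by
  ext v
  simp only [Set.mem_iUnion, Set.mem_image, mem_factorFinset, leftExt, Set.mem_ofPred_eq]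
  constructor
  · rintro ⟨i, rfl⟩
    refine ⟨_, factorAt_mem_factors w (i + 1) n, w i, ?_, (factorAt_succ' w i n).symm⟩
    rw [factorAt_length, ← factorAt_succ']
    exact factorAt_mem_factors w i (n + 1)
  · rintro ⟨u, hu, a, ha, rfl⟩
    rwa [length_of_mem_factors hu] at ha

theorem factors_add_two_eq_biUnion_biExt [Finite A] (n : ℕ) :
    factors w (n + 2) =
      ⋃ u ∈ factorFinset w n, (fun p : A × A => p.1 :: (u ++ [p.2])) '' biExt w u := by
  ext v
  simp only [Set.mem_iUnion, Set.mem_image, mem_factorFinset, biExt, Set.mem_ofPred_eq,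
    Prod.exists]
  constructor
  · rintro ⟨i, rfl⟩
    have hv : factorAt w i (n + 2) = w i :: (factorAt w (i + 1) n ++ [w (i + 1 + n)]) := by
      rw [factorAt_succ', factorAt_succ]
    refine ⟨_, factorAt_mem_factors w (i + 1) n, w i, w (i + 1 + n), ?_, hv.symm⟩
    rw [factorAt_length, ← hv]
    exact factorAt_mem_factors w i (n + 2)
  · rintro ⟨u, hu, a, b, hab, rfl⟩
    rwa [length_of_mem_factors hu] at hab

theorem complexity_succ_eq_sum_rightExt [Finite A] (n : ℕ) :
    complexity w (n + 1) = ∑ u ∈ factorFinset w n, (rightExt w u).ncard := by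
  rw [complexity, factors_succ_eq_biUnion_rightExt]
  exact Set.ncard_biUnion_image_eq_sum _ (fun _ => Set.toFinite _)
    (g := fun u b => u ++ [b]) fun _ _ _ _ h => by simpa using h

theorem complexity_succ_eq_sum_leftExt [Finite A] (n : ℕ) :
    complexity w (n + 1) = ∑ u ∈ factorFinset w n, (leftExt w u).ncard := by
  rw [complexity, factors_succ_eq_biUnion_leftExt]
  exact Set.ncard_biUnion_image_eq_sum _ (fun _ => Set.toFinite _)
    (g := fun u a => a :: u) fun _ _ _ _ h => by simpa [and_comm] using h

theorem complexity_add_two_eq_sum_biExt [Finite A] (n : ℕ) :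
    complexity w (n + 2) = ∑ u ∈ factorFinset w n, (biExt w u).ncard := by
  have hg : Function.Injective2 fun (u : List A) (p : A × A) => p.1 :: (u ++ [p.2]) := by
    intro u u' p p' h
    obtain ⟨h₁, h₂⟩ := List.cons.inj h
    obtain ⟨rfl, h₃⟩ := List.append_inj' h₂ rfl
    exact ⟨rfl, Prod.ext h₁ (List.singleton_inj.1 h₃)⟩
  rw [complexity, factors_add_two_eq_biUnion_biExt]
  exact Set.ncard_biUnion_image_eq_sum _ (fun _ => Set.toFinite _) hg

theorem mem_leftExt_of_mem_biExt {u : List A} {p : A × A} (hp : p ∈ biExt w u) :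
    p.1 ∈ leftExt w u := by
  have h := dropLast_mem_factors (n := u.length + 1) hp
  rwa [← List.cons_append, List.dropLast_concat] at h

theorem mem_rightExt_of_mem_biExt {u : List A} {p : A × A} (hp : p ∈ biExt w u) :
    p.2 ∈ rightExt w u := by
  simpa [rightExt] using tail_mem_factors (n := u.length + 1) hp

end Factors

section ExtensionGraph

variable {d : ℕ} (w : ℕ → Fin d) (u : List (Fin d))

theorem ncard_extVertices :
    (extVertices w u).ncard = (leftExt w u).ncard + (rightExt w u).ncard := by
  have h : extVertices w u = Sum.inl '' leftExt w u ∪ Sum.inr '' rightExt w u := by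
    ext (a | b) <;> simp [extVertices, leftExt, rightExt]
  rw [h, Set.ncard_union_eq Set.disjoint_image_inl_image_inr,
    Set.ncard_image_of_injective _ Sum.inl_injective,
    Set.ncard_image_of_injective _ Sum.inr_injective]

theorem support_extGraph_subset : (extGraph w u).support ⊆ extVertices w u := by
  rintro _ ⟨_, a, b, hab, ⟨rfl, rfl⟩ | ⟨rfl, rfl⟩⟩
  · exact Or.inl ⟨a, rfl, mem_leftExt_of_mem_biExt w (p := (a, b)) hab⟩
  · exact Or.inr ⟨b, rfl, mem_rightExt_of_mem_biExt w (p := (a, b)) hab⟩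

theorem edgeSet_extGraph :
    (extGraph w u).edgeSet = (fun p => s(Sum.inl p.1, Sum.inr p.2)) '' biExt w u := by
  ext e
  induction e using Sym2.ind with
  | _ x y =>
    simp only [SimpleGraph.mem_edgeSet, extGraph, Set.mem_image, Prod.exists, biExt,
      Set.mem_ofPred_eq, Sym2.eq_iff]
    grind

theorem natCard_edgeSet_extGraph_induce :
    Nat.card ((extGraph w u).induce (extVertices w u)).edgeSet = (biExt w u).ncard := by
  rw [SimpleGraph.natCard_edgeSet_induce_of_support_subset (support_extGraph_subset w u),
    Nat.card_coe_set_eq, edgeSet_extGraph, Set.ncard_image_of_injective]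
  rintro ⟨a, b⟩ ⟨a', b'⟩ h
  simp_all

theorem isTree_extGraph_induce_iff :
    ((extGraph w u).induce (extVertices w u)).IsTree ↔
      ((extGraph w u).induce (extVertices w u)).Connected ∧
        (biExt w u).ncard + 1 = (leftExt w u).ncard + (rightExt w u).ncard := by
  rw [SimpleGraph.isTree_iff_connected_and_card, natCard_edgeSet_extGraph_induce,
    Nat.card_coe_set_eq, ncard_extVertices]

theorem ncard_leftExt_add_ncard_rightExt_le
    (h : ((extGraph w u).induce (extVertices w u)).Connected) :
    (leftExt w u).ncard + (rightExt w u).ncard ≤ (biExt w u).ncard + 1 := by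
  have h := h.card_vert_le_card_edgeSet_add_one
  rwa [natCard_edgeSet_extGraph_induce, Nat.card_coe_set_eq, ncard_extVertices] at h

end ExtensionGraph

theorem forall_isTree_iff_second_diff_eq_zero {d : ℕ} (w : ℕ → Fin d) (n : ℕ)
    (hconn : ∀ u ∈ factors w n, ((extGraph w u).induce (extVertices w u)).Connected) :
    (∀ u ∈ factors w n, ((extGraph w u).induce (extVertices w u)).IsTree) ↔
      complexity w (n + 2) + complexity w n = 2 * complexity w (n + 1) := by
  have hsum : complexity w (n + 2) + complexity w n = 2 * complexity w (n + 1) ↔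
      ∑ u ∈ factorFinset w n, ((leftExt w u).ncard + (rightExt w u).ncard) =
        ∑ u ∈ factorFinset w n, ((biExt w u).ncard + 1) := by
    rw [Finset.sum_add_distrib, Finset.sum_add_distrib, ← complexity_succ_eq_sum_leftExt,
      ← complexity_succ_eq_sum_rightExt, ← complexity_add_two_eq_sum_biExt,
      Finset.sum_const, smul_eq_mul, mul_one, ← complexity_eq_card_factorFinset]
    omega
  rw [hsum, Finset.sum_eq_sum_iff_of_le fun u hu =>
    ncard_leftExt_add_ncard_rightExt_le w u (hconn u ((mem_factorFinset w).1 hu))]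
  simp only [mem_factorFinset]
  refine forall₂_congr fun u hu => ?_
  rw [isTree_extGraph_induce_iff, and_iff_right (hconn u hu), eq_comm]

theorem stmt19 (d : ℕ) (w : ℕ → Fin d) (hall : complexity w 1 = d) :
    Dendric w ↔
      (∀ n, 1 ≤ n → complexity w n = (d - 1) * n + 1) ∧
      (∀ n, ∀ u ∈ factors w n,
        ((extGraph w u).induce (extVertices w u)).Connected) := by
  constructor
  · intro hw
    have hconn n u hu := (hw n u hu).connected
    have hdiff n := (forall_isTree_iff_second_diff_eq_zero w n (hconn n)).1 (hw n)
    refine ⟨fun n _ => ?_, hconn⟩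
    have h := Nat.add_mul_eq_of_second_diff_eq_zero hdiff n
    rw [complexity_zero, hall] at h
    obtain ⟨e, rfl⟩ := Nat.exists_eq_add_one.2 (w 0).pos
    simp only [Nat.add_sub_cancel]
    linarith
  · rintro ⟨hlin, hconn⟩ n
    have hp : ∀ n, complexity w n = (d - 1) * n + 1
      | 0 => complexity_zero w
      | n + 1 => hlin (n + 1) n.succ_pos
    rw [forall_isTree_iff_second_diff_eq_zero w n (hconn n), hp, hp, hp]
    ring
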